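/- Let m be a product of distinct odd primes q_1, ..., q_r, and suppose for each divisor n of m with n > 1 we are given a complex number S_n, and complex numbers L, N_q (for q | m) satisfying the recursion N_{q_1}...N_{q_r} L = (-1)^r Sum over divisors n > 1 of m of Prod_{q | (m/n)} (1 - q) * S_n. Suppose ord_2(S_n) >= t(n) for all proper divisors n of m with n > 1, and ord_2(N_{q_1}...N_{q_r} L) >= t(m), where t is an additive function on divisors (t(ab) = t(a) + t(b) for coprime a, b) with ord_2(1 - q) >= t(q) for each q | m. Then ord_2(S_m) >= t(m). -/
import Mathlib


/-- The `2`-adic valuation on `ℚ`, with `ord2 0 = ⊤`. -/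
noncomputable def ord2 (x : ℚ) : WithTop ℤ :=
  if x = 0 then ⊤ else (padicValRat 2 x : WithTop ℤ)

private lemma fact2 : Fact (Nat.Prime 2) := ⟨Nat.prime_two⟩

lemma ord2_zero : ord2 0 = ⊤ := by simp [ord2]

lemma ord2_one : ord2 1 = 0 := by simp [ord2]

lemma ord2_mul (x y : ℚ) : ord2 (x * y) = ord2 x + ord2 y := by
  have := fact2
  rcases eq_or_ne x 0 with hx | hx
  · simp [hx, ord2]
  rcases eq_or_ne y 0 with hy | hy
  · simp [hy, ord2]
  rw [ord2, ord2, ord2, if_neg (mul_ne_zero hx hy), if_neg hx, if_neg hy,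
    padicValRat.mul hx hy]
  push_cast
  rfl

lemma ord2_neg (x : ℚ) : ord2 (-x) = ord2 x := by
  rcases eq_or_ne x 0 with hx | hx
  · simp [hx]
  · rw [ord2, ord2, if_neg (neg_ne_zero.mpr hx), if_neg hx, padicValRat.neg]

lemma le_ord2_add {c : WithTop ℤ} {x y : ℚ} (hx : c ≤ ord2 x) (hy : c ≤ ord2 y) :
    c ≤ ord2 (x + y) := by
  have := fact2
  rcases eq_or_ne x 0 with h | h
  · simpa [h] using hy
  rcases eq_or_ne y 0 with h' | h'
  · simpa [h'] using hx
  rcases eq_or_ne (x + y) 0 with h'' | h''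
  · simp [h'', ord2]
  have key := padicValRat.min_le_padicValRat_add (p := 2) h''
  calc c ≤ min (ord2 x) (ord2 y) := le_min hx hy
    _ ≤ _ := by
      rw [ord2, if_neg h, ord2, if_neg h', ord2, if_neg h'', ← WithTop.coe_min]
      exact_mod_cast key

lemma le_ord2_sum {ι : Type*} [DecidableEq ι] {c : WithTop ℤ} (s : Finset ι) (f : ι → ℚ)
    (h : ∀ i ∈ s, c ≤ ord2 (f i)) : c ≤ ord2 (∑ i ∈ s, f i) := by
  induction s using Finset.induction_on with
  | empty => simp [ord2_zero]
  | @insert a s hnot ih =>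
    rw [Finset.sum_insert hnot]
    exact le_ord2_add (h a (Finset.mem_insert_self a s))
      (ih fun i hi => h i (Finset.mem_insert_of_mem hi))

lemma ord2_prod {ι : Type*} [DecidableEq ι] (s : Finset ι) (f : ι → ℚ) :
    ord2 (∏ i ∈ s, f i) = ∑ i ∈ s, ord2 (f i) := by
  induction s using Finset.induction_on with
  | empty => simp [ord2_one]
  | @insert a s hnot ih =>
    rw [Finset.prod_insert hnot, Finset.sum_insert hnot, ord2_mul, ih]

lemma ord2_neg_one_pow (r : ℕ) : ord2 ((-1 : ℚ) ^ r) = 0 := by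
  rcases Nat.even_or_odd r with h | h
  · rw [h.neg_one_pow, ord2_one]
  · rw [h.neg_one_pow]
    rw [show (-1 : ℚ) = -(1:ℚ) from rfl, ord2_neg, ord2_one]

lemma t_one {t : ℕ → ℤ} (ht : ∀ a b : ℕ, a.Coprime b → t (a * b) = t a + t b) :
    t 1 = 0 := by
  have := ht 1 1 (Nat.coprime_one_left 1)
  simpa using this.symm

lemma t_prod_primes {t : ℕ → ℤ} (ht : ∀ a b : ℕ, a.Coprime b → t (a * b) = t a + t b)
    (s : Finset ℕ) (hs : ∀ p ∈ s, p.Prime) :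
    t (∏ p ∈ s, p) = ∑ p ∈ s, t p := by
  induction s using Finset.induction_on with
  | empty => simpa using t_one ht
  | @insert a s hnot ih =>
    have ha : a.Prime := hs a (Finset.mem_insert_self a s)
    have hcop : a.Coprime (∏ p ∈ s, p) := by
      apply Nat.Coprime.prod_right
      intro p hp
      exact (Nat.coprime_primes ha (hs p (Finset.mem_insert_of_mem hp))).mpr
        (fun h => hnot (h ▸ hp))
    rw [Finset.prod_insert hnot, Finset.sum_insert hnot, ht a _ hcop,
      ih fun p hp => hs p (Finset.mem_insert_of_mem hp)]

lemma t_eq_sum {t : ℕ → ℤ} (ht : ∀ a b : ℕ, a.Coprime b → t (a * b) = t a + t b)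
    {n : ℕ} (hn : Squarefree n) : t n = ∑ p ∈ n.primeFactors, t p := by
  conv_lhs => rw [← Nat.prod_primeFactors_of_squarefree hn]
  exact t_prod_primes ht _ fun p hp => Nat.prime_of_mem_primeFactors hp

/-- Induction step of Lemma 4.1, abstracted.  Let `m` be a product of distinct odd primes,
`S n` (for divisors `n > 1` of `m`), `L` and `N q` rationals satisfying the recursion
`N_{q_1} ⋯ N_{q_r} L = (-1)^r ∑_{n ∣ m, n > 1} ∏_{q ∣ m/n} (1 - q) · S n`, and let `t` be an
additive function with `ord₂(S n) ≥ t n` for proper divisors `n > 1`,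
`ord₂(N_{q_1} ⋯ N_{q_r} L) ≥ t m` and `ord₂(1 - q) ≥ t q` for every prime `q ∣ m`.
Then `ord₂(S m) ≥ t m`. -/
theorem ord2_S_m_ge
    (m : ℕ) (hsq : Squarefree m) (hodd : Odd m) (h1 : 1 < m)
    (S : ℕ → ℚ) (L : ℚ) (N : ℕ → ℚ) (t : ℕ → ℤ)
    (ht : ∀ a b : ℕ, a.Coprime b → t (a * b) = t a + t b)
    (hrec : (∏ q ∈ m.primeFactors, N q) * L
      = (-1 : ℚ) ^ m.primeFactors.card *
          ∑ n ∈ m.divisors.filter (fun n => 1 < n),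
            (∏ q ∈ (m / n).primeFactors, (1 - (q : ℚ))) * S n)
    (hS : ∀ n ∈ m.divisors, 1 < n → n ≠ m → (t n : WithTop ℤ) ≤ ord2 (S n))
    (hNL : (t m : WithTop ℤ) ≤ ord2 ((∏ q ∈ m.primeFactors, N q) * L))
    (hq : ∀ q ∈ m.primeFactors, (t q : WithTop ℤ) ≤ ord2 (1 - (q : ℚ))) :
    (t m : WithTop ℤ) ≤ ord2 (S m) := by
  have hm0 : m ≠ 0 := by omega
  set r := m.primeFactors.card with hr
  set A := m.divisors.filter (fun n => 1 < n) with hA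
  have hmA : m ∈ A := by
    simp [hA, Nat.mem_divisors, hm0, h1]
  -- split off the n = m term
  have hsplit : ∑ n ∈ A, (∏ q ∈ (m / n).primeFactors, (1 - (q : ℚ))) * S n
      = S m + ∑ n ∈ A.erase m, (∏ q ∈ (m / n).primeFactors, (1 - (q : ℚ))) * S n := by
    rw [← Finset.add_sum_erase A _ hmA]
    congr 1
    rw [Nat.div_self (by omega : 0 < m)]
    simp
  set R := ∑ n ∈ A.erase m, (∏ q ∈ (m / n).primeFactors, (1 - (q : ℚ))) * S n with hR
  have hsq2 : ((-1 : ℚ) ^ r) * ((-1 : ℚ) ^ r) = 1 := by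
    rw [← pow_add]
    exact Even.neg_one_pow ⟨r, by ring⟩
  have hSm : S m = (-1 : ℚ) ^ r * ((∏ q ∈ m.primeFactors, N q) * L) - R := by
    have h3 : (-1 : ℚ) ^ r * ((∏ q ∈ m.primeFactors, N q) * L) = S m + R := by
      rw [hrec, hsplit, ← mul_assoc, hsq2, one_mul]
    linarith [h3]
  rw [hSm, sub_eq_add_neg]
  apply le_ord2_add
  · rw [ord2_mul, ord2_neg_one_pow, zero_add]
    exact hNL
  · rw [ord2_neg]
    apply le_ord2_sum
    intro n hn
    have hnA : n ∈ A := Finset.mem_of_mem_erase hn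
    have hnm : n ≠ m := Finset.ne_of_mem_erase hn
    have hdvd : n ∣ m := (Nat.mem_divisors.mp (Finset.mem_filter.mp hnA).1).1
    have h1n : 1 < n := (Finset.mem_filter.mp hnA).2
    have hmul : (m / n) * n = m := Nat.div_mul_cancel hdvd
    have hcop : (m / n).Coprime n := by
      apply Nat.coprime_of_squarefree_mul
      rw [hmul]; exact hsq
    have hsqdiv : Squarefree (m / n) := hsq.squarefree_of_dvd (Nat.div_dvd_of_dvd hdvd)
    have htm : t m = t (m / n) + t n := by
      rw [← ht _ _ hcop, hmul]
    rw [ord2_mul, ord2_prod, htm]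
    push_cast
    apply add_le_add
    · rw [t_eq_sum ht hsqdiv]
      push_cast
      apply Finset.sum_le_sum
      intro q hq'
      exact hq q (Nat.primeFactors_mono (Nat.div_dvd_of_dvd hdvd) hm0 hq')
    · exact hS n (Nat.mem_divisors.mpr ⟨hdvd, hm0⟩) h1n hnm
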